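/- arXiv:2103.00963 — 4 statements merged into one kernel-verified Lean document; each statement's English description precedes it below -/
import Mathlib

section
/- Let V be the complex vector space with basis {ζᵢ, ωᵢ, τᵢ : i ∈ {2,3,4}} and work in the exterior algebra Λ(V). Given arbitrary complex scalars zᵢ, wᵢ, tᵢ for i ∈ {2,3,4}, for i ≠ j define the degree-2 element N_{ij} = (zᵢ−z_j)·(ωᵢ−ω_j)∧(τᵢ−τ_j) − (wᵢ−w_j)·(ζᵢ−ζ_j)∧(τᵢ−τ_j) + (tᵢ−t_j)·(ζᵢ−ζ_j)∧(ωᵢ−ω_j). Then N₃₂ ∧ N₂₄ ∧ N₄₃ = 0 in Λ(V). -/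
open ExteriorAlgebra

/-- The underlying vector space: basis indexed by pairs `(a, i)` where `a : Fin 3`
chooses among the three families `ζ, ω, τ` and `i : Fin 3` labels the vertices
`2, 3, 4` (so `i = 0 ↦ vertex 2`, `i = 1 ↦ vertex 3`, `i = 2 ↦ vertex 4`). -/
abbrev PropVS : Type := Fin 3 → Fin 3 → ℂ

/-- The basis vector `ζᵢ` (playing the role of `dz̄ᵢ`). -/
noncomputable def ζ (i : Fin 3) : ExteriorAlgebra ℂ PropVS :=
  ExteriorAlgebra.ι ℂ (Pi.single 0 (Pi.single i 1))

/-- The basis vector `ωᵢ` (playing the role of `dw̄ᵢ`). -/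
noncomputable def ω (i : Fin 3) : ExteriorAlgebra ℂ PropVS :=
  ExteriorAlgebra.ι ℂ (Pi.single 1 (Pi.single i 1))

/-- The basis vector `τᵢ` (playing the role of `dtᵢ`). -/
noncomputable def τ (i : Fin 3) : ExteriorAlgebra ℂ PropVS :=
  ExteriorAlgebra.ι ℂ (Pi.single 2 (Pi.single i 1))

/-- The numerator 2-form of the 5d Chern–Simons propagator between vertices `i` and `j`:
`N_{ij} = (zᵢ−z_j)·(ωᵢ−ω_j)∧(τᵢ−τ_j) − (wᵢ−w_j)·(ζᵢ−ζ_j)∧(τᵢ−τ_j)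
          + (tᵢ−t_j)·(ζᵢ−ζ_j)∧(ωᵢ−ω_j)`. -/
noncomputable def propNum (z w t : Fin 3 → ℂ) (i j : Fin 3) : ExteriorAlgebra ℂ PropVS :=
  (z i - z j) • ((ω i - ω j) * (τ i - τ j))
    - (w i - w j) • ((ζ i - ζ j) * (τ i - τ j))
    + (t i - t j) • ((ζ i - ζ j) * (ω i - ω j))

/-!
Each `N` is the contraction (`wedgeCofactor`) of the row of scalar differences of its edge with
the wedge of its three 1-form differences. Around the closed triangle the 1-form differences of
each family span only a plane, so a nonzero monomial of the product uses each family exactly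
twice, i.e. each factor omits a different family; collecting terms, the product is `-det X` times
a volume form, where `X` has the three rows. The rows sum to zero, so `det X = 0`.
-/

section WedgeCofactor

variable {R A : Type*} [CommRing R] [Ring A] [Algebra R A]

def wedgeCofactor (x : Fin 3 → R) (a b c : A) : A :=
  x 0 • (b * c) - x 1 • (a * c) + x 2 • (a * b)

theorem mul_left_comm_neg_of_anticomm {x y : A} (h : y * x = -(x * y)) (u : A) :
    y * (x * u) = -(x * (y * u)) := by
  rw [← mul_assoc, h, neg_mul, mul_assoc]

theorem mul_mul_eq_zero_of_mul_self_eq_zero {x : A} (h : x * x = 0) (u : A) : x * (x * u) = 0 := by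
  rw [← mul_assoc, h, zero_mul]

theorem wedgeCofactor_mul_mul_wedgeCofactor_neg_add (X : Matrix (Fin 3) (Fin 3) R) (e : Fin 6 → A)
    (hsq : ∀ i, e i * e i = 0) (hanti : ∀ i j, e j * e i = -(e i * e j)) :
    wedgeCofactor (X 0) (e 0) (e 2) (e 4) * wedgeCofactor (X 1) (e 1) (e 3) (e 5) *
      wedgeCofactor (X 2) (-(e 0 + e 1)) (-(e 2 + e 3)) (-(e 4 + e 5)) =
      -X.det • (e 0 * e 1 * e 2 * e 3 * e 4 * e 5) := by
  -- The anticommutation rules are oriented so that `simp` sorts every monomial into `e 0 * … * e 5`.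
  simp only [wedgeCofactor, Matrix.det_fin_three, mul_add, add_mul, mul_sub, sub_mul, mul_neg,
    neg_mul, neg_neg, smul_mul_assoc, mul_smul_comm, mul_assoc, smul_smul, hsq,
    mul_mul_eq_zero_of_mul_self_eq_zero (hsq _), hanti 2 3, hanti 2 4, hanti 2 5, hanti 3 4, hanti 3 5,
    hanti 4 5, mul_left_comm_neg_of_anticomm (hanti 0 1), mul_left_comm_neg_of_anticomm (hanti 0 2),
    mul_left_comm_neg_of_anticomm (hanti 0 3), mul_left_comm_neg_of_anticomm (hanti 0 4),
    mul_left_comm_neg_of_anticomm (hanti 0 5), mul_left_comm_neg_of_anticomm (hanti 1 2),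
    mul_left_comm_neg_of_anticomm (hanti 1 3), mul_left_comm_neg_of_anticomm (hanti 1 4),
    mul_left_comm_neg_of_anticomm (hanti 1 5), mul_left_comm_neg_of_anticomm (hanti 2 3),
    mul_left_comm_neg_of_anticomm (hanti 2 4), mul_left_comm_neg_of_anticomm (hanti 2 5),
    mul_left_comm_neg_of_anticomm (hanti 3 4), mul_left_comm_neg_of_anticomm (hanti 3 5),
    smul_zero, mul_zero, smul_neg, neg_smul, add_zero, zero_add, sub_zero, zero_sub, neg_zero]
  module

end WedgeCofactor

theorem Matrix.det_eq_zero_of_sum_rows_eq_zero {n R : Type*} [Fintype n] [DecidableEq n]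
    [Nonempty n] [CommRing R] (A : Matrix n n R) (h : ∀ j, ∑ k, A k j = 0) : A.det = 0 := by
  let i : n := Classical.arbitrary n
  have := A.transpose.det_updateCol_sum i 1
  simp only [Pi.one_apply, one_smul, transpose_apply, h] at this
  rw [← det_transpose, ← this]
  exact det_eq_zero_of_column_eq_zero i fun k => by simp

namespace ExteriorAlgebra

variable {R M : Type*} [CommRing R] [AddCommGroup M] [Module R M]

theorem mul_self_eq_zero_of_mem_range {x : ExteriorAlgebra R M}
    (hx : x ∈ LinearMap.range (ι R)) : x * x = 0 := by
  obtain ⟨v, rfl⟩ := hx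
  exact ι_sq_zero v

theorem mul_eq_neg_mul_of_mem_range {x y : ExteriorAlgebra R M}
    (hx : x ∈ LinearMap.range (ι R)) (hy : y ∈ LinearMap.range (ι R)) : y * x = -(x * y) := by
  obtain ⟨u, rfl⟩ := hx
  obtain ⟨v, rfl⟩ := hy
  exact eq_neg_of_add_eq_zero_left (ι_add_mul_swap v u)

end ExteriorAlgebra

theorem propNum_eq_wedgeCofactor (z w t : Fin 3 → ℂ) (i j : Fin 3) :
    propNum z w t i j =
      wedgeCofactor ![z i - z j, w i - w j, t i - t j] (ζ i - ζ j) (ω i - ω j) (τ i - τ j) :=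
  rfl

/-- `N₃₂ ∧ N₂₄ ∧ N₄₃ = 0`: no higher-loop correction to the internal 3-point vertex.
(Vertices `2, 3, 4` correspond to indices `0, 1, 2 : Fin 3`.) -/
theorem propNum_triangle_vanishes (z w t : Fin 3 → ℂ) :
    propNum z w t 1 0 * propNum z w t 0 2 * propNum z w t 2 1 = 0 := by
  set e : Fin 6 → ExteriorAlgebra ℂ PropVS :=
    ![ζ 1 - ζ 0, ζ 0 - ζ 2, ω 1 - ω 0, ω 0 - ω 2, τ 1 - τ 0, τ 0 - τ 2]
  set X : Matrix (Fin 3) (Fin 3) ℂ :=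
    !![z 1 - z 0, w 1 - w 0, t 1 - t 0; z 0 - z 2, w 0 - w 2, t 0 - t 2;
      z 2 - z 1, w 2 - w 1, t 2 - t 1]
  have he : ∀ k, e k ∈ LinearMap.range (ι ℂ) := by
    intro k
    fin_cases k <;> exact sub_mem ⟨_, rfl⟩ ⟨_, rfl⟩
  have h21 : propNum z w t 2 1 =
      wedgeCofactor (X 2) (-(e 0 + e 1)) (-(e 2 + e 3)) (-(e 4 + e 5)) := by
    rw [propNum_eq_wedgeCofactor]
    congr 1 <;> simp [e]
  have hX : X.det = 0 := X.det_eq_zero_of_sum_rows_eq_zero fun j => by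
    fin_cases j <;> simp [X, Fin.sum_univ_three]
  calc propNum z w t 1 0 * propNum z w t 0 2 * propNum z w t 2 1
      = -X.det • (e 0 * e 1 * e 2 * e 3 * e 4 * e 5) := by
        rw [h21]
        exact wedgeCofactor_mul_mul_wedgeCofactor_neg_add X e
          (fun k => mul_self_eq_zero_of_mem_range (he k))
          (fun k l => mul_eq_neg_mul_of_mem_range (he k) (he l))
    _ = 0 := by rw [hX, neg_zero, zero_smul]
end

section
/- For natural numbers m and n, the function x ↦ x^{m−n}·(1−x)^{n−m+1} (with integer exponents m−n and n−m+1 in ℤ, i.e. zpow) is integrable on the open interval (0,1) if and only if m = n or m = n+1; and in each of these two cases ∫_0^1 x^{m−n}(1−x)^{n−m+1} dx = 1/2. -/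
/-!
Near `x = 0` the factor `(1 - x) ^ b` is bounded above and away from zero, so the integrand
behaves like `x ^ a`, which is integrable at `0` iff `a > -1`; the reflection `x ↦ 1 - x`
handles the endpoint `1`. For integer exponents this means `a, b ≥ 0`, and with
`a = m - n`, `b = n - m + 1` that is `m = n` or `m = n + 1`. In these two cases the integrand is
`1 - x` or `x`, which the reflection exchanges, and `∫₀¹ x dx = 1 / 2`.
-/

open Real MeasureTheory Set

lemma measurePreserving_one_sub_Ioo_zero_one :
    MeasurePreserving (fun x : ℝ => 1 - x) (volume.restrict (Ioo 0 1))
      (volume.restrict (Ioo 0 1)) := by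
  simpa [preimage_const_sub_Ioo] using
    (volume.measurePreserving_sub_left (1 : ℝ)).restrict_preimage
      (measurableSet_Ioo (a := (0 : ℝ)) (b := 1))

lemma integrableOn_Ioo_zero_one_comp_one_sub_iff {f : ℝ → ℝ} :
    IntegrableOn (fun x => f (1 - x)) (Ioo 0 1) ↔ IntegrableOn f (Ioo 0 1) :=
  measurePreserving_one_sub_Ioo_zero_one.integrable_comp_emb
    (Homeomorph.subLeft (1 : ℝ)).measurableEmbedding

lemma setIntegral_Ioo_zero_one_comp_one_sub (f : ℝ → ℝ) :
    ∫ x in Ioo 0 1, f (1 - x) = ∫ x in Ioo 0 1, f x :=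
  measurePreserving_one_sub_Ioo_zero_one.integral_comp
    (Homeomorph.subLeft (1 : ℝ)).measurableEmbedding f

lemma setIntegral_Ioo_zero_one_id : ∫ x in Ioo (0 : ℝ) 1, x = 1 / 2 := by
  rw [← integral_Ioc_eq_integral_Ioo, ← intervalIntegral.integral_of_le zero_le_one]
  norm_num [integral_id]

lemma setIntegral_Ioo_zero_one_one_sub : ∫ x in Ioo (0 : ℝ) 1, (1 - x) = 1 / 2 :=
  (setIntegral_Ioo_zero_one_comp_one_sub id).trans setIntegral_Ioo_zero_one_id

lemma not_integrableOn_Ioo_zpow_mul_one_sub_zpow {a : ℤ} (ha : a ≤ -1) (b : ℤ) :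
    ¬ IntegrableOn (fun x : ℝ => x ^ a * (1 - x) ^ b) (Ioo 0 1) := by
  intro h
  have hcont : ContinuousOn (fun x : ℝ => (1 - x) ^ (-b)) (Icc 0 (1 / 2)) :=
    ContinuousOn.zpow₀ (by fun_prop) _ fun x hx => Or.inl (by linarith [hx.2])
  obtain ⟨C, hC⟩ := isCompact_Icc.exists_bound_of_continuousOn hcont
  have hprod : IntegrableOn (fun x : ℝ => (1 - x) ^ (-b) * (x ^ a * (1 - x) ^ b))
      (Ioo 0 (1 / 2)) :=
    (h.mono_set (Ioo_subset_Ioo_right (by norm_num))).bdd_mul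
      ((hcont.mono Ioo_subset_Icc_self).aestronglyMeasurable measurableSet_Ioo)
      ((ae_restrict_iff' measurableSet_Ioo).2 <|
        .of_forall fun x hx => hC x (Ioo_subset_Icc_self hx))
  have hpow : IntegrableOn (fun x : ℝ => x ^ (a : ℝ)) (Ioo 0 (1 / 2)) := by
    refine hprod.congr_fun (fun x hx => ?_) measurableSet_Ioo
    have h1x : (1 - x) ^ b ≠ 0 := zpow_ne_zero _ (by linarith [hx.2])
    dsimp only
    rw [rpow_intCast, zpow_neg, mul_left_comm, inv_mul_cancel₀ h1x, mul_one]
  have := (intervalIntegral.integrableOn_Ioo_rpow_iff (by norm_num)).1 hpow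
  exact this.not_ge (by exact_mod_cast ha)

lemma integrableOn_Ioo_zpow_mul_one_sub_zpow_iff {a b : ℤ} :
    IntegrableOn (fun x : ℝ => x ^ a * (1 - x) ^ b) (Ioo 0 1) ↔ 0 ≤ a ∧ 0 ≤ b := by
  refine ⟨fun h => ⟨?_, ?_⟩, fun ⟨ha, hb⟩ => ?_⟩
  · by_contra! ha
    exact not_integrableOn_Ioo_zpow_mul_one_sub_zpow (by omega) b h
  · by_contra! hb
    refine not_integrableOn_Ioo_zpow_mul_one_sub_zpow (by omega : b ≤ -1) a ?_
    rw [← integrableOn_Ioo_zero_one_comp_one_sub_iff]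
    simpa only [sub_sub_cancel, mul_comm] using h
  · have hcont : Continuous fun x : ℝ => x ^ a * (1 - x) ^ b :=
      (continuous_id.zpow₀ a fun _ => Or.inr ha).mul
        ((continuous_const.sub continuous_id).zpow₀ b fun _ => Or.inr hb)
    exact hcont.integrableOn_Icc.mono_set Ioo_subset_Icc_self

/-- The Feynman-parameter integral `∫_0^1 x^{m−n}(1−x)^{n−m+1} dx` (integer exponents):
it is integrable on `(0,1)` iff `m = n` or `m = n+1`, and in each of these cases it
evaluates to `1/2`. -/
theorem feynman_parameter_selection_rule (m n : ℕ) :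
    (IntegrableOn (fun x : ℝ => x ^ ((m : ℤ) - n) * (1 - x) ^ ((n : ℤ) - m + 1))
        (Set.Ioo (0 : ℝ) 1) ↔ (m = n ∨ m = n + 1)) ∧
      ((m = n ∨ m = n + 1) →
        ∫ x in Set.Ioo (0 : ℝ) 1, x ^ ((m : ℤ) - n) * (1 - x) ^ ((n : ℤ) - m + 1) =
          1 / 2) := by
  refine ⟨integrableOn_Ioo_zpow_mul_one_sub_zpow_iff.trans (by omega), ?_⟩
  rintro (rfl | rfl)
  · simpa using setIntegral_Ioo_zero_one_one_sub
  · simpa using setIntegral_Ioo_zero_one_id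
end

section
/- For natural numbers m, n with m = n or m = n+1, and every real T > 0, the triple integral 4π² · ∫_0^1 ∫_0^∞ ∫_0^∞ x^{2m+2}·(1−x)^{2n+3} · r_z^5 · r_w · (r_z² + r_w² + x(1−x)T²)^{-(m+n+6)} dr_w dr_z dx equals π² · T^{-(2m+2n+4)} / ((m+n+2)·(m+n+3)·(m+n+4)·(m+n+5)). -/
/-!
The two radial integrals are elementary: `r (r² + a)^(-K)` has the primitive
`-(r² + a)^(1-K) / (2(K-1))`, and `r⁵ = r ((r² + a) - a)²` reduces `∫ r⁵ (r² + a)^(-K)` to three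
integrals of that kind. Doing the `r_w` and then the `r_z` integral with `a = r_z² + x(1-x)T²`,
resp. `a = x(1-x)T²`, leaves `(x(1-x)T²)^(-(m+n+2)) / (2(m+n+2)(m+n+3)(m+n+4)(m+n+5))`.
For `m = n` resp. `m = n + 1` the Feynman-parameter factor then collapses to `1 - x` resp. `x`,
both of which integrate to `1/2` over `(0, 1)`.
-/

open Real MeasureTheory Filter Set Topology

section SqAddZpow

variable {a : ℝ} {K : ℤ}

lemma hasDerivAt_sq_add_zpow (ha : 0 < a) (k : ℤ) (r : ℝ) :
    HasDerivAt (fun r : ℝ => (r ^ 2 + a) ^ k) (k * (r ^ 2 + a) ^ (k - 1) * (2 * r)) r := by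
  have hpos : 0 < r ^ 2 + a := by positivity
  refine ((hasDerivAt_zpow k _ (Or.inl hpos.ne')).comp r
    ((hasDerivAt_pow 2 r).add_const a)).congr_deriv ?_
  simp

lemma hasDerivAt_neg_sq_add_zpow_div (ha : 0 < a) (hK : 1 < K) (r : ℝ) :
    HasDerivAt (fun r : ℝ => -((r ^ 2 + a) ^ (1 - K) / (2 * (K - 1))))
      (r * (r ^ 2 + a) ^ (-K)) r := by
  have hK' : (K : ℝ) - 1 ≠ 0 := sub_ne_zero.2 (by exact_mod_cast hK.ne')
  refine ((hasDerivAt_sq_add_zpow ha (1 - K) r).div_const (2 * ((K : ℝ) - 1))).neg.congr_deriv ?_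
  rw [show (1 : ℤ) - K - 1 = -K by ring]
  push_cast
  field_simp
  ring

lemma tendsto_sq_add_zpow_atTop (hK : K < 0) :
    Tendsto (fun r : ℝ => (r ^ 2 + a) ^ K) atTop (𝓝 0) :=
  (tendsto_zpow_atTop_zero hK).comp
    (tendsto_atTop_add_const_right _ a (tendsto_pow_atTop two_ne_zero))

lemma tendsto_neg_sq_add_zpow_div (hK : 1 < K) :
    Tendsto (fun r : ℝ => -((r ^ 2 + a) ^ (1 - K) / (2 * (K - 1)))) atTop (𝓝 0) := by
  simpa using ((tendsto_sq_add_zpow_atTop (by omega : 1 - K < 0)).div_const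
    (2 * ((K : ℝ) - 1))).neg

lemma mul_sq_add_zpow_nonneg (ha : 0 ≤ a) (k : ℤ) {r : ℝ} (hr : 0 ≤ r) :
    0 ≤ r * (r ^ 2 + a) ^ k :=
  mul_nonneg hr (zpow_nonneg (by positivity) _)

lemma integrableOn_Ioi_mul_sq_add_zpow (ha : 0 < a) (hK : 1 < K) :
    IntegrableOn (fun r : ℝ => r * (r ^ 2 + a) ^ (-K)) (Ioi 0) :=
  integrableOn_Ioi_deriv_of_nonneg' (fun r _ => hasDerivAt_neg_sq_add_zpow_div ha hK r)
    (fun _ hr => mul_sq_add_zpow_nonneg ha.le _ hr.le) (tendsto_neg_sq_add_zpow_div hK)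

lemma integral_Ioi_mul_sq_add_zpow (ha : 0 < a) (hK : 1 < K) :
    ∫ r in Ioi 0, r * (r ^ 2 + a) ^ (-K) = a ^ (1 - K) / (2 * (K - 1)) := by
  rw [integral_Ioi_of_hasDerivAt_of_nonneg' (fun r _ => hasDerivAt_neg_sq_add_zpow_div ha hK r)
    (fun _ hr => mul_sq_add_zpow_nonneg ha.le _ hr.le) (tendsto_neg_sq_add_zpow_div hK)]
  simp

lemma integral_Ioi_pow_five_mul_sq_add_zpow (ha : 0 < a) (hK : 3 < K) :
    ∫ r in Ioi 0, r ^ 5 * (r ^ 2 + a) ^ (-K) =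
      a ^ (3 - K) / ((K - 1) * (K - 2) * (K - 3)) := by
  have hsplit : ∀ r : ℝ, r ^ 5 * (r ^ 2 + a) ^ (-K) =
      r * (r ^ 2 + a) ^ (-(K - 2)) - 2 * a * (r * (r ^ 2 + a) ^ (-(K - 1))) +
        a ^ 2 * (r * (r ^ 2 + a) ^ (-K)) := by
    intro r
    have hpos : r ^ 2 + a ≠ 0 := by positivity
    rw [show -(K - 2) = 2 + -K by ring, show -(K - 1) = 1 + -K by ring,
      zpow_add₀ hpos, zpow_add₀ hpos]
    simp only [zpow_ofNat]
    ring
  have hint : ∀ j : ℤ, j ≤ 2 → IntegrableOn (fun r : ℝ => r * (r ^ 2 + a) ^ (-(K - j))) (Ioi 0) :=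
    fun j hj => integrableOn_Ioi_mul_sq_add_zpow ha (by omega)
  have hint0 := hint 0 (by norm_num)
  simp only [sub_zero] at hint0
  simp_rw [hsplit]
  rw [integral_add, integral_sub, integral_const_mul, integral_const_mul,
    integral_Ioi_mul_sq_add_zpow ha (by omega), integral_Ioi_mul_sq_add_zpow ha (by omega),
    integral_Ioi_mul_sq_add_zpow ha (by omega)]
  rotate_left
  · exact hint 2 le_rfl
  · exact (hint 1 (by norm_num)).const_mul _
  · exact (hint 2 le_rfl).sub ((hint 1 (by norm_num)).const_mul _)
  · exact hint0.const_mul _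
  have hK' : (3 : ℝ) < K := by exact_mod_cast hK
  rw [show 1 - (K - 2) = 2 + (1 - K) by ring, show 1 - (K - 1) = 1 + (1 - K) by ring,
    show 3 - K = 2 + (1 - K) by ring, zpow_add₀ ha.ne', zpow_add₀ ha.ne']
  push_cast
  rw [show (K : ℝ) - 2 - 1 = K - 3 by ring, show (K : ℝ) - 1 - 1 = K - 2 by ring, zpow_one]
  have h1 : (K : ℝ) - 1 ≠ 0 := by linarith
  have h2 : (K : ℝ) - 2 ≠ 0 := by linarith
  have h3 : (K : ℝ) - 3 ≠ 0 := by linarith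
  field_simp
  ring

end SqAddZpow

lemma integral_Ioi_integral_Ioi_radial {c : ℝ} (hc : 0 < c) {K : ℤ} (hK : 4 < K) :
    ∫ rz in Ioi 0, ∫ rw in Ioi 0, rz ^ 5 * rw * (rz ^ 2 + rw ^ 2 + c) ^ (-K) =
      c ^ (4 - K) / (2 * (K - 1) * (K - 2) * (K - 3) * (K - 4)) := by
  have inner : ∀ rz : ℝ, ∫ rw in Ioi 0, rz ^ 5 * rw * (rz ^ 2 + rw ^ 2 + c) ^ (-K) =
      rz ^ 5 * (rz ^ 2 + c) ^ (-(K - 1)) / (2 * (K - 1)) := by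
    intro rz
    simp_rw [show ∀ rw : ℝ, rz ^ 5 * rw * (rz ^ 2 + rw ^ 2 + c) ^ (-K) =
      rz ^ 5 * (rw * (rw ^ 2 + (rz ^ 2 + c)) ^ (-K)) from fun rw => by ring_nf]
    rw [integral_const_mul, integral_Ioi_mul_sq_add_zpow (by positivity) (by omega),
      show 1 - K = -(K - 1) by ring, mul_div_assoc]
  simp_rw [inner]
  rw [integral_div, integral_Ioi_pow_five_mul_sq_add_zpow hc (by omega),
    show 3 - (K - 1) = 4 - K by ring]
  have hK' : (4 : ℝ) < K := by exact_mod_cast hK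
  have h1 : (K : ℝ) - 1 ≠ 0 := by linarith
  have h2 : (K : ℝ) - 2 ≠ 0 := by linarith
  have h3 : (K : ℝ) - 3 ≠ 0 := by linarith
  have h4 : (K : ℝ) - 4 ≠ 0 := by linarith
  push_cast
  rw [show (K : ℝ) - 1 - 1 = K - 2 by ring, show (K : ℝ) - 1 - 2 = K - 3 by ring,
    show (K : ℝ) - 1 - 3 = K - 4 by ring]
  field_simp

lemma integral_Ioo_pow_mul_one_sub_pow_eq_half {m n : ℕ} (hmn : m = n ∨ m = n + 1) :
    ∫ x in Ioo (0 : ℝ) 1, x ^ (2 * m + 2) * (1 - x) ^ (2 * n + 3) *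
      (x * (1 - x)) ^ (-((m : ℤ) + n + 2)) = 1 / 2 := by
  have hweight : ∀ x ∈ Ioo (0 : ℝ) 1, x ^ (2 * m + 2) * (1 - x) ^ (2 * n + 3) *
      (x * (1 - x)) ^ (-((m : ℤ) + n + 2)) = if m = n then 1 - x else x := by
    rintro x ⟨hx0, hx1⟩
    have hx1' : (1 - x) ≠ 0 := by linarith
    rcases hmn with rfl | rfl
    · rw [if_pos rfl, show -((m : ℤ) + m + 2) = -((2 * m + 2 : ℕ) : ℤ) by push_cast; ring,
        zpow_neg, zpow_natCast, mul_pow]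
      field_simp
      ring
    · rw [if_neg (by omega), show -(((n + 1 : ℕ) : ℤ) + n + 2) = -((2 * n + 3 : ℕ) : ℤ) by
        push_cast; ring, zpow_neg, zpow_natCast, mul_pow]
      field_simp
      ring
  rw [setIntegral_congr_fun measurableSet_Ioo hweight, ← integral_Ioc_eq_integral_Ioo,
    ← intervalIntegral.integral_of_le zero_le_one]
  split_ifs
  · rw [intervalIntegral.integral_sub intervalIntegrable_const intervalIntegral.intervalIntegrable_id]
    norm_num [integral_id]
  · simp [integral_id]

/-- The full V₂ vertex integral of the 1-loop Feynman diagram for `Δ_{𝒜,𝒜}`: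
for `m = n` or `m = n+1` and `T > 0`,
`4π² ∫_0^1 ∫_0^∞ ∫_0^∞ x^{2m+2}(1−x)^{2n+3} r_z^5 r_w (r_z²+r_w²+x(1−x)T²)^{-(m+n+6)}
    dr_w dr_z dx = π² · T^{-(2m+2n+4)} / ((m+n+2)(m+n+3)(m+n+4)(m+n+5))`. -/
theorem v2_vertex_integral (m n : ℕ) (hmn : m = n ∨ m = n + 1) (T : ℝ) (hT : 0 < T) :
    4 * π ^ 2 *
        ∫ x in Set.Ioo (0 : ℝ) 1, ∫ rz in Set.Ioi (0 : ℝ), ∫ rw in Set.Ioi (0 : ℝ),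
          x ^ (2 * m + 2) * (1 - x) ^ (2 * n + 3) * rz ^ 5 * rw *
            (rz ^ 2 + rw ^ 2 + x * (1 - x) * T ^ 2) ^ (-((m : ℤ) + n + 6)) =
      π ^ 2 * T ^ (-(2 * (m : ℤ) + 2 * n + 4)) /
        (((m : ℝ) + n + 2) * ((m : ℝ) + n + 3) * ((m : ℝ) + n + 4) * ((m : ℝ) + n + 5)) := by
  have radial : ∀ x ∈ Ioo (0 : ℝ) 1,
      ∫ rz in Ioi (0 : ℝ), ∫ rw in Ioi (0 : ℝ),
        x ^ (2 * m + 2) * (1 - x) ^ (2 * n + 3) * rz ^ 5 * rw *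
          (rz ^ 2 + rw ^ 2 + x * (1 - x) * T ^ 2) ^ (-((m : ℤ) + n + 6)) =
      x ^ (2 * m + 2) * (1 - x) ^ (2 * n + 3) * (x * (1 - x)) ^ (-((m : ℤ) + n + 2)) *
        (T ^ (-(2 * (m : ℤ) + 2 * n + 4)) /
          (2 * ((m : ℝ) + n + 5) * ((m : ℝ) + n + 4) * ((m : ℝ) + n + 3) * ((m : ℝ) + n + 2))) := by
    rintro x ⟨hx0, hx1⟩
    have hc : 0 < x * (1 - x) * T ^ 2 := by have := sub_pos.2 hx1; positivity
    have hconst : ∀ rz rw : ℝ, x ^ (2 * m + 2) * (1 - x) ^ (2 * n + 3) * rz ^ 5 * rw *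
        (rz ^ 2 + rw ^ 2 + x * (1 - x) * T ^ 2) ^ (-((m : ℤ) + n + 6)) =
        x ^ (2 * m + 2) * (1 - x) ^ (2 * n + 3) *
          (rz ^ 5 * rw * (rz ^ 2 + rw ^ 2 + x * (1 - x) * T ^ 2) ^ (-((m : ℤ) + n + 6))) :=
      fun _ _ => by ring
    simp_rw [hconst, integral_const_mul]
    rw [integral_Ioi_integral_Ioi_radial hc (by omega),
      show 4 - ((m : ℤ) + n + 6) = -((m : ℤ) + n + 2) by ring, mul_zpow, ← zpow_natCast T 2,
      ← zpow_mul, show ((2 : ℕ) : ℤ) * -((m : ℤ) + n + 2) = -(2 * (m : ℤ) + 2 * n + 4) by ring]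
    push_cast
    ring
  rw [setIntegral_congr_fun measurableSet_Ioo radial, integral_mul_const,
    integral_Ioo_pow_mul_one_sub_pow_eq_half hmn]
  field_simp
  ring
end

section
/- The triple integral ∫_0^1 ∫_{-∞}^{∞} ∫_0^∞ √(x·(1−x)³) · (1 − 2x) · r^5 · (t² + r² + x(1−x))^{-4} dr dt dx equals π/36. -/
open Real MeasureTheory Filter Set Topology

/-! The `r`-integral is elementary: `∫₀^∞ r⁵ (r² + c)⁻⁴ dr = 1/(6c)`. The `t`-integral is then a
Lorentzian, `∫ (t² + a)⁻¹ dt = π/√a` with `a = x(1-x)`, and the factor `√(x(1-x)³)` cancels `√a`,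
leaving the polynomial `(π/6)(1-x)(1-2x)`, whose integral over `[0,1]` is `π/36`. -/

theorem integral_Ioi_pow_five_mul_sq_add_zpow_neg_four {c : ℝ} (hc : 0 < c) :
    ∫ r in Ioi (0 : ℝ), r ^ 5 * (r ^ 2 + c) ^ (-(4 : ℤ)) = (6 * c)⁻¹ := by
  have hpos : ∀ r : ℝ, 0 < r ^ 2 + c := fun r => by positivity
  -- partial fractions in `u = r² + c`, using `r⁵ dr = (u - c)² du / 2`
  set g : ℝ → ℝ := fun r => -(1 / 2) * ((r ^ 2 + c) ^ 1)⁻¹ + c / 2 * ((r ^ 2 + c) ^ 2)⁻¹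
    - c ^ 2 / 6 * ((r ^ 2 + c) ^ 3)⁻¹ with hg
  have hderiv : ∀ r ∈ Ici (0 : ℝ), HasDerivAt g (r ^ 5 * (r ^ 2 + c) ^ (-(4 : ℤ))) r := by
    intro r _
    have hq : HasDerivAt (fun r : ℝ => r ^ 2 + c) (2 * r) r := by
      simpa using (hasDerivAt_pow 2 r).add_const c
    have hinv (k : ℕ) := (hq.pow k).inv (pow_ne_zero k (hpos r).ne')
    refine ((((hinv 1).const_mul _).add ((hinv 2).const_mul _)).sub
      ((hinv 3).const_mul _)).congr_deriv ?_
    have := (hpos r).ne'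
    simp only [Pi.pow_apply, zpow_neg]
    field_simp
    ring
  have hnonneg : ∀ r ∈ Ioi (0 : ℝ), 0 ≤ r ^ 5 * (r ^ 2 + c) ^ (-(4 : ℤ)) := fun r hr =>
    mul_nonneg (pow_nonneg (le_of_lt hr) 5) (zpow_nonneg (hpos r).le _)
  have hlim : Tendsto g atTop (𝓝 0) := by
    have hq : Tendsto (fun r : ℝ => r ^ 2 + c) atTop atTop :=
      tendsto_atTop_add_const_right _ c (tendsto_pow_atTop two_ne_zero)
    have hinv (k : ℕ) (hk : k ≠ 0) : Tendsto (fun r : ℝ => ((r ^ 2 + c) ^ k)⁻¹) atTop (𝓝 0) :=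
      ((tendsto_pow_atTop hk).comp hq).inv_tendsto_atTop
    rw [show (0 : ℝ) = -(1 / 2) * 0 + c / 2 * 0 - c ^ 2 / 6 * 0 by ring]
    exact (((hinv 1 one_ne_zero).const_mul _).add ((hinv 2 two_ne_zero).const_mul _)).sub
      ((hinv 3 three_ne_zero).const_mul _)
  rw [integral_Ioi_of_hasDerivAt_of_nonneg' hderiv hnonneg hlim, hg]
  field_simp
  ring

theorem integral_inv_sq_add {a : ℝ} (ha : 0 < a) : ∫ t : ℝ, (t ^ 2 + a)⁻¹ = π / √a := by
  set s := √a
  have hs : 0 < s := sqrt_pos.mpr ha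
  have hs2 : s ^ 2 = a := sq_sqrt ha.le
  calc ∫ t : ℝ, (t ^ 2 + a)⁻¹ = ∫ t : ℝ, a⁻¹ * (1 + (s⁻¹ * t) ^ 2)⁻¹ := by
        congr 1 with t
        rw [← hs2]
        field_simp
        ring
    _ = a⁻¹ * (|s| • ∫ u : ℝ, (1 + u ^ 2)⁻¹) := by
        rw [integral_const_mul, Measure.integral_comp_inv_mul_left (fun u : ℝ => (1 + u ^ 2)⁻¹)]
    _ = π / s := by
        rw [integral_univ_inv_one_add_sq, abs_of_pos hs, smul_eq_mul, ← hs2]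
        field_simp

theorem integral_integral_Ioi_mul_pow_five_mul_zpow_neg_four (K : ℝ) {a : ℝ} (ha : 0 < a) :
    ∫ t : ℝ, ∫ r in Ioi (0 : ℝ), K * r ^ 5 * (t ^ 2 + r ^ 2 + a) ^ (-(4 : ℤ)) =
      K * π / (6 * √a) := by
  have hr (t : ℝ) : ∫ r in Ioi (0 : ℝ), K * r ^ 5 * (t ^ 2 + r ^ 2 + a) ^ (-(4 : ℤ)) =
      K / 6 * (t ^ 2 + a)⁻¹ := by
    have hrw (r : ℝ) : K * r ^ 5 * (t ^ 2 + r ^ 2 + a) ^ (-(4 : ℤ)) =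
        K * (r ^ 5 * (r ^ 2 + (t ^ 2 + a)) ^ (-(4 : ℤ))) := by
      ring_nf
    simp_rw [hrw]
    rw [integral_const_mul, integral_Ioi_pow_five_mul_sq_add_zpow_neg_four (by positivity),
      mul_inv]
    ring
  simp_rw [hr]
  rw [integral_const_mul, integral_inv_sq_add ha]
  ring

theorem integral_one_sub_mul_one_sub_two_mul :
    ∫ x in (0 : ℝ)..1, (1 - x) * (1 - 2 * x) = 1 / 6 := by
  have hF (x : ℝ) : HasDerivAt (fun x : ℝ => x - 3 / 2 * x ^ 2 + 2 / 3 * x ^ 3)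
      ((1 - x) * (1 - 2 * x)) x := by
    refine (((hasDerivAt_id x).sub ((hasDerivAt_pow 2 x).const_mul _)).add
      ((hasDerivAt_pow 3 x).const_mul _)).congr_deriv ?_
    push_cast
    ring
  rw [intervalIntegral.integral_eq_sub_of_hasDerivAt (fun x _ => hF x)
    ((by fun_prop : Continuous fun x : ℝ => (1 - x) * (1 - 2 * x)).intervalIntegrable _ _)]
  norm_num

/-- The first V₂ vertex integral of the `Δ_{𝒲∞,𝒲∞}` 1-loop diagram:
`∫_0^1 ∫_{-∞}^{∞} ∫_0^∞ √(x(1−x)³)·(1−2x)·r^5·(t²+r²+x(1−x))^{-4} dr dt dx = π/36`. -/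
theorem www_first_v2_integral :
    (∫ x in Set.Ioo (0 : ℝ) 1, ∫ t : ℝ, ∫ r in Set.Ioi (0 : ℝ),
        Real.sqrt (x * (1 - x) ^ 3) * (1 - 2 * x) * r ^ 5 *
          (t ^ 2 + r ^ 2 + x * (1 - x)) ^ (-(4 : ℤ))) = π / 36 := by
  have inner : ∀ x ∈ Ioo (0 : ℝ) 1, (∫ t : ℝ, ∫ r in Ioi (0 : ℝ),
      √(x * (1 - x) ^ 3) * (1 - 2 * x) * r ^ 5 * (t ^ 2 + r ^ 2 + x * (1 - x)) ^ (-(4 : ℤ))) =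
        π / 6 * ((1 - x) * (1 - 2 * x)) := by
    rintro x ⟨hx0, hx1⟩
    have ha : 0 < x * (1 - x) := mul_pos hx0 (sub_pos.mpr hx1)
    have hsqrt : √(x * (1 - x) ^ 3) = √(x * (1 - x)) * (1 - x) := by
      rw [show x * (1 - x) ^ 3 = x * (1 - x) * (1 - x) ^ 2 by ring, sqrt_mul ha.le,
        sqrt_sq (sub_pos.mpr hx1).le]
    rw [integral_integral_Ioi_mul_pow_five_mul_zpow_neg_four _ ha, hsqrt]
    have := (sqrt_pos.mpr ha).ne'
    field_simp
  rw [setIntegral_congr_fun measurableSet_Ioo inner, ← integral_Ioc_eq_integral_Ioo,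
    ← intervalIntegral.integral_of_le zero_le_one, intervalIntegral.integral_const_mul,
    integral_one_sub_mul_one_sub_two_mul]
  ring
end
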